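/- Let R be a commutative Noetherian ring of prime characteristic p, I ⊆ R an ideal, and for e ≥ 1 let K_e = (I^{[p^e]} :_R I), where I^{[p^e]} is the ideal generated by p^e-th powers of elements of I. Then for all integers a, b ≥ 1, K_a · (K_b)^{[p^a]} ⊆ K_{a+b}. -/
import Mathlib


/-- The Frobenius power `J^{[q]}`: the ideal generated by `q`-th powers of elements of `J`. -/
def frobPow {R : Type*} [CommRing R] (J : Ideal R) (q : ℕ) : Ideal R :=
  Ideal.span ((fun f => f ^ q) '' (J : Set R))

lemma frobPow_eq_map {R : Type*} [CommRing R] (p : ℕ) [Fact p.Prime] [CharP R p]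
    (J : Ideal R) (a : ℕ) : frobPow J (p ^ a) = Ideal.map (iterateFrobenius R p a) J := by
  rfl

theorem stmt3 {R : Type*} [CommRing R] [IsNoetherianRing R] (p : ℕ) [Fact p.Prime]
    [CharP R p] (I : Ideal R) (a b : ℕ) (ha : 1 ≤ a) (hb : 1 ≤ b) :
    (frobPow I (p ^ a)).colon I * frobPow ((frobPow I (p ^ b)).colon I) (p ^ a) ≤
      (frobPow I (p ^ (a + b))).colon I := by
  -- Key: frobPow K_b (p^a) * frobPow I (p^a) ≤ frobPow I (p^(a+b))
  have hKI : (frobPow I (p ^ b)).colon I * I ≤ frobPow I (p ^ b) := by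
    rw [Ideal.mul_le]
    intro s hs x hx
    simpa [smul_eq_mul] using Submodule.mem_colon.1 hs x hx
  have key : frobPow ((frobPow I (p ^ b)).colon I) (p ^ a) * frobPow I (p ^ a) ≤
      frobPow I (p ^ (a + b)) := by
    rw [frobPow_eq_map p _ a]
    rw [frobPow_eq_map p I a]
    rw [← Ideal.map_mul]
    rw [frobPow_eq_map p I (a + b)]
    rw [iterateFrobenius_add]
    rw [← Ideal.map_map]
    exact Ideal.map_mono (hKI.trans (frobPow_eq_map p I b).le)
  rw [Ideal.mul_le]
  intro r hr t ht
  rw [Submodule.mem_colon]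
  intro x hx
  have hrx : r * x ∈ frobPow I (p ^ a) := by
    simpa [smul_eq_mul] using Submodule.mem_colon.1 hr x hx
  have : t * (r * x) ∈ frobPow I (p ^ (a + b)) := key (Ideal.mul_mem_mul ht hrx)
  simpa [smul_eq_mul, mul_comm, mul_assoc, mul_left_comm] using this
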